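/- Let (H, R) be a triangular Hopf algebra (τ(R⁻¹) = R) and A a left H-module algebra. Then the q-commutator [a,b]_χ := m((id − χ)(a ⊗ b)), with χ(a ⊗ b) = (R₂ ▷ b) ⊗ (R₁ ▷ a), satisfies the generalized Jacobi identity: [·,·]_χ ∘ ([·,·]_χ ⊗ id) = [·,·]_χ ∘ (id ⊗ [·,·]_χ) + [·,·]_χ ∘ ([·,·]_χ ⊗ id) ∘ (id ⊗ χ) as maps A ⊗ A ⊗ A → A. -/

import Mathlib

/- STATEMENT 0: The R-matrix of a quasi-triangular Hopf algebra satisfies the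
quantum Yang–Baxter equation R₁₂R₁₃R₂₃ = R₂₃R₁₃R₁₂ in H ⊗ H ⊗ H. -/

open TensorProduct

noncomputable section

variable (k H : Type*) [Field k] [Ring H] [HopfAlgebra k H]

/-- `a ⊗ b ↦ a ⊗ b ⊗ 1` (legs 1,2 of `(H ⊗ H) ⊗ H`). -/
def leg12 : H ⊗[k] H →ₐ[k] (H ⊗[k] H) ⊗[k] H := Algebra.TensorProduct.includeLeft

/-- `a ⊗ b ↦ a ⊗ 1 ⊗ b` (legs 1,3 of `(H ⊗ H) ⊗ H`). -/
def leg13 : H ⊗[k] H →ₐ[k] (H ⊗[k] H) ⊗[k] H :=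
  Algebra.TensorProduct.map Algebra.TensorProduct.includeLeft (AlgHom.id k H)

/-- `a ⊗ b ↦ 1 ⊗ a ⊗ b` (legs 2,3 of `(H ⊗ H) ⊗ H`). -/
def leg23 : H ⊗[k] H →ₐ[k] (H ⊗[k] H) ⊗[k] H :=
  Algebra.TensorProduct.map Algebra.TensorProduct.includeRight (AlgHom.id k H)

/-- `a ⊗ b ↦ a ⊗ (b ⊗ 1)` (legs 1,2 of `H ⊗ (H ⊗ H)`). -/
def leg12' : H ⊗[k] H →ₐ[k] H ⊗[k] (H ⊗[k] H) :=
  Algebra.TensorProduct.map (AlgHom.id k H) Algebra.TensorProduct.includeLeft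

/-- `a ⊗ b ↦ a ⊗ (1 ⊗ b)` (legs 1,3 of `H ⊗ (H ⊗ H)`). -/
def leg13' : H ⊗[k] H →ₐ[k] H ⊗[k] (H ⊗[k] H) :=
  Algebra.TensorProduct.map (AlgHom.id k H) Algebra.TensorProduct.includeRight

/-- A quasi-triangular structure on the Hopf algebra `H`: an invertible element
`R ∈ H ⊗ H` such that `Δᵒᵖ(h) = R Δ(h) R⁻¹`, `(Δ ⊗ id)(R) = R₁₃R₂₃` and
`(id ⊗ Δ)(R) = R₁₃R₁₂`. -/
structure QuasiTriangular where
  R : H ⊗[k] H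
  Rinv : H ⊗[k] H
  mul_inv : R * Rinv = 1
  inv_mul : Rinv * R = 1
  intertwine : ∀ h : H,
    (TensorProduct.comm k H H) (Coalgebra.comul h) = R * Coalgebra.comul h * Rinv
  comul_id : TensorProduct.map Coalgebra.comul LinearMap.id R = leg13 k H R * leg23 k H R
  id_comul : TensorProduct.map LinearMap.id Coalgebra.comul R = leg13' k H R * leg12' k H R

variable (A : Type*) [Ring A] [Algebra k A]

/-- A left `H`-module-algebra structure on the `k`-algebra `A`: an action of `H`
by `k`-linear endomorphisms such that `h ▷ (ab) = (h₁ ▷ a)(h₂ ▷ b)` and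
`h ▷ 1 = ε(h) 1`. -/
structure ModuleAlgebra where
  act : H →ₐ[k] Module.End k A
  act_mul : ∀ (h : H) (a b : A), act h (a * b) =
    LinearMap.mul' k A
      ((TensorProduct.homTensorHomMap (RingHom.id k) A A A A)
        ((TensorProduct.map act.toLinearMap act.toLinearMap) (Coalgebra.comul h))
        (a ⊗ₜ[k] b))
  act_one : ∀ h : H, act h (1 : A) = Coalgebra.counit (R := k) h • (1 : A)

variable {k H A}

/-- The braiding associated to an element `R = Σ R₁ ⊗ R₂` of `H ⊗ H`:
`a ⊗ b ↦ (R₂ ▷ b) ⊗ (R₁ ▷ a)`. -/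
def braid (MA : ModuleAlgebra k H A) (R : H ⊗[k] H) : A ⊗[k] A →ₗ[k] A ⊗[k] A :=
  (TensorProduct.comm k A A).toLinearMap ∘ₗ
    (TensorProduct.homTensorHomMap (RingHom.id k) A A A A)
      ((TensorProduct.map MA.act.toLinearMap MA.act.toLinearMap) R)

/-- The deformed commutator `[a,b]_χ = m((id - χ)(a ⊗ b))` associated to a braiding
`χ : A ⊗ A → A ⊗ A`. -/
def qBracket (χ : A ⊗[k] A →ₗ[k] A ⊗[k] A) : A ⊗[k] A →ₗ[k] A :=
  LinearMap.mul' k A ∘ₗ (LinearMap.id - χ)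

/-- `χ ⊗ id` acting on `A ⊗ (A ⊗ A)`. -/
def leftOp (χ : A ⊗[k] A →ₗ[k] A ⊗[k] A) : A ⊗[k] (A ⊗[k] A) →ₗ[k] A ⊗[k] (A ⊗[k] A) :=
  (TensorProduct.assoc k A A A).toLinearMap ∘ₗ LinearMap.rTensor A χ ∘ₗ
    (TensorProduct.assoc k A A A).symm.toLinearMap

/-- `id ⊗ χ` acting on `A ⊗ (A ⊗ A)`. -/
def rightOp (χ : A ⊗[k] A →ₗ[k] A ⊗[k] A) : A ⊗[k] (A ⊗[k] A) →ₗ[k] A ⊗[k] (A ⊗[k] A) :=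
  LinearMap.lTensor A χ

/-- `m ⊗ id : A ⊗ (A ⊗ A) → A ⊗ A`, multiplying the first two factors. -/
def mul12 : A ⊗[k] (A ⊗[k] A) →ₗ[k] A ⊗[k] A :=
  LinearMap.rTensor A (LinearMap.mul' k A) ∘ₗ (TensorProduct.assoc k A A A).symm.toLinearMap

/-- `id ⊗ m : A ⊗ (A ⊗ A) → A ⊗ A`, multiplying the last two factors. -/
def mul23 : A ⊗[k] (A ⊗[k] A) →ₗ[k] A ⊗[k] A :=
  LinearMap.lTensor A (LinearMap.mul' k A)

section Aux

variable (MA : ModuleAlgebra k H A)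

/-- `β : H ⊗ H →ₐ End (A ⊗ A)`, `x ⊗ y ↦ (act x) ⊗ (act y)`. -/
def betaHom : H ⊗[k] H →ₐ[k] Module.End k (A ⊗[k] A) :=
  (Module.endTensorEndAlgHom (R := k) (S := k) (A := k) (M := A) (N := A)).comp
    (Algebra.TensorProduct.map MA.act MA.act)

lemma betaHom_tmul (x y : H) :
    betaHom MA (x ⊗ₜ[k] y) = TensorProduct.map (MA.act x) (MA.act y) := by
  rfl

lemma betaHom_eq (X : H ⊗[k] H) :
    (betaHom MA X : A ⊗[k] A →ₗ[k] A ⊗[k] A)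
      = TensorProduct.homTensorHomMap (RingHom.id k) A A A A
          (TensorProduct.map MA.act.toLinearMap MA.act.toLinearMap X) := by
  induction X using TensorProduct.induction_on with
  | zero => simp
  | tmul x y => simp [betaHom_tmul, TensorProduct.homTensorHomMap_apply]
  | add u v hu hv => simp [map_add, hu, hv]

lemma braid_eq (X : H ⊗[k] H) :
    braid MA X = (TensorProduct.comm k A A).toLinearMap ∘ₗ (betaHom MA X) := by
  rw [braid, betaHom_eq]

/-- `γ : (H ⊗ H) ⊗ H →ₐ End (A ⊗ (A ⊗ A))`. -/
def gammaHom : (H ⊗[k] H) ⊗[k] H →ₐ[k] Module.End k (A ⊗[k] (A ⊗[k] A)) :=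
  ((Module.endTensorEndAlgHom (R := k) (S := k) (A := k) (M := A) (N := A ⊗[k] A)).comp
    (Algebra.TensorProduct.map MA.act (betaHom MA))).comp
    (Algebra.TensorProduct.assoc (R := k) (S := k) (T := k) (A := H) (C := H) (D := H)).toAlgHom

lemma gammaHom_tmul (x y z : H) :
    gammaHom MA ((x ⊗ₜ[k] y) ⊗ₜ[k] z)
      = TensorProduct.map (MA.act x) (TensorProduct.map (MA.act y) (MA.act z)) := by
  rfl

/-- swap of the first two factors of `A ⊗ (A ⊗ A)`. -/
def P1 : A ⊗[k] (A ⊗[k] A) →ₗ[k] A ⊗[k] (A ⊗[k] A) :=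
  (TensorProduct.assoc k A A A).toLinearMap ∘ₗ
    LinearMap.rTensor A (TensorProduct.comm k A A).toLinearMap ∘ₗ
    (TensorProduct.assoc k A A A).symm.toLinearMap

/-- swap of the last two factors of `A ⊗ (A ⊗ A)`. -/
def P2 : A ⊗[k] (A ⊗[k] A) →ₗ[k] A ⊗[k] (A ⊗[k] A) :=
  LinearMap.lTensor A (TensorProduct.comm k A A).toLinearMap

@[simp] lemma P1_tmul (a b c : A) :
    P1 (a ⊗ₜ[k] (b ⊗ₜ[k] c)) = b ⊗ₜ[k] (a ⊗ₜ[k] c) := by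
  simp [P1]

@[simp] lemma P2_tmul (a b c : A) :
    P2 (a ⊗ₜ[k] (b ⊗ₜ[k] c)) = a ⊗ₜ[k] (c ⊗ₜ[k] b) := by
  simp [P2]

/-- swap of the first two factors of `(H ⊗ H) ⊗ H`. -/
def t12 : (H ⊗[k] H) ⊗[k] H →ₗ[k] (H ⊗[k] H) ⊗[k] H :=
  LinearMap.rTensor H (TensorProduct.comm k H H).toLinearMap

/-- swap of the last two factors of `(H ⊗ H) ⊗ H`. -/
def t23 : (H ⊗[k] H) ⊗[k] H →ₗ[k] (H ⊗[k] H) ⊗[k] H :=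
  (TensorProduct.assoc k H H H).symm.toLinearMap ∘ₗ
    LinearMap.lTensor H (TensorProduct.comm k H H).toLinearMap ∘ₗ
    (TensorProduct.assoc k H H H).toLinearMap

@[simp] lemma t12_tmul (x y z : H) :
    t12 (k := k) ((x ⊗ₜ[k] y) ⊗ₜ[k] z) = (y ⊗ₜ[k] x) ⊗ₜ[k] z := by
  simp [t12]

@[simp] lemma t23_tmul (x y z : H) :
    t23 (k := k) ((x ⊗ₜ[k] y) ⊗ₜ[k] z) = (x ⊗ₜ[k] z) ⊗ₜ[k] y := by
  simp [t23]

lemma t23_leg12 (X : H ⊗[k] H) : t23 (k := k) (leg12 k H X) = leg13 k H X := by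
  induction X using TensorProduct.induction_on with
  | zero => simp
  | tmul x y => simp [leg12, leg13, Algebra.TensorProduct.includeLeft_apply]
  | add u v hu hv => simp [map_add, hu, hv]

lemma t23_leg13 (X : H ⊗[k] H) : t23 (k := k) (leg13 k H X) = leg12 k H X := by
  induction X using TensorProduct.induction_on with
  | zero => simp
  | tmul x y => simp [leg12, leg13, Algebra.TensorProduct.includeLeft_apply]
  | add u v hu hv => simp [map_add, hu, hv]

lemma t12_leg13 (X : H ⊗[k] H) : t12 (k := k) (leg13 k H X) = leg23 k H X := by
  induction X using TensorProduct.induction_on with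
  | zero => simp
  | tmul x y => simp [leg23, leg13]
  | add u v hu hv => simp [map_add, hu, hv]

lemma t12_leg23 (X : H ⊗[k] H) : t12 (k := k) (leg23 k H X) = leg13 k H X := by
  induction X using TensorProduct.induction_on with
  | zero => simp
  | tmul x y => simp [leg23, leg13]
  | add u v hu hv => simp [map_add, hu, hv]

lemma ext3 {M : Type*} [AddCommMonoid M] [Module k M]
    {f g : A ⊗[k] (A ⊗[k] A) →ₗ[k] M}
    (h : ∀ a b c : A, f (a ⊗ₜ[k] (b ⊗ₜ[k] c)) = g (a ⊗ₜ[k] (b ⊗ₜ[k] c))) : f = g := by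
  apply TensorProduct.ext'
  intro a u
  induction u using TensorProduct.induction_on with
  | zero => simp
  | tmul b c => exact h a b c
  | add u v hu hv => rw [TensorProduct.tmul_add, map_add, map_add, hu, hv]

lemma braid_zero : braid MA (0 : H ⊗[k] H) = 0 := by
  simp only [braid_eq, map_zero]; rfl

lemma braid_add (X Y : H ⊗[k] H) : braid MA (X + Y) = braid MA X + braid MA Y := by
  simp only [braid_eq, map_add]
  rw [LinearMap.comp_add]

lemma leftOp_zero : leftOp (0 : A ⊗[k] A →ₗ[k] A ⊗[k] A) = 0 := by
  simp [leftOp]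

lemma leftOp_add (f g : A ⊗[k] A →ₗ[k] A ⊗[k] A) : leftOp (f + g) = leftOp f + leftOp g := by
  simp only [leftOp, LinearMap.rTensor_add, LinearMap.add_comp, LinearMap.comp_add]

lemma rightOp_zero : rightOp (0 : A ⊗[k] A →ₗ[k] A ⊗[k] A) = 0 := by
  simp [rightOp]

lemma rightOp_add (f g : A ⊗[k] A →ₗ[k] A ⊗[k] A) : rightOp (f + g) = rightOp f + rightOp g := by
  simp [rightOp, LinearMap.lTensor_add]

@[simp] lemma leftOp_tmul (f : A ⊗[k] A →ₗ[k] A ⊗[k] A) (a b c : A) :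
    leftOp f (a ⊗ₜ[k] (b ⊗ₜ[k] c))
      = (TensorProduct.assoc k A A A) (f (a ⊗ₜ[k] b) ⊗ₜ[k] c) := by
  simp [leftOp]

@[simp] lemma braid_tmul (x y : H) (a b : A) :
    braid MA (x ⊗ₜ[k] y) (a ⊗ₜ[k] b) = (MA.act y b) ⊗ₜ[k] (MA.act x a) := by
  simp [braid_eq, betaHom_tmul]

/-- `γ w` commutes with `P1` up to `t12`. -/
lemma gamma_P1 (w : (H ⊗[k] H) ⊗[k] H) (u : A ⊗[k] (A ⊗[k] A)) :
    gammaHom MA w (P1 u) = P1 (gammaHom MA (t12 (k := k) w) u) := by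
  induction w using TensorProduct.induction_on with
  | zero => simp
  | tmul p z =>
    induction p using TensorProduct.induction_on with
    | zero => simp [TensorProduct.zero_tmul]
    | tmul x y =>
      rw [t12_tmul]
      induction u using TensorProduct.induction_on with
      | zero => simp
      | tmul a v =>
        induction v using TensorProduct.induction_on with
        | zero => simp [TensorProduct.tmul_zero]
        | tmul b c => simp [gammaHom_tmul]
        | add v₁ v₂ h₁ h₂ => simp only [TensorProduct.tmul_add, map_add, h₁, h₂]
      | add u₁ u₂ h₁ h₂ => simp only [map_add, h₁, h₂]
    | add p₁ p₂ h₁ h₂ =>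
      simp only [TensorProduct.add_tmul, map_add, LinearMap.add_apply, h₁, h₂]
  | add w₁ w₂ h₁ h₂ =>
    simp only [map_add, LinearMap.add_apply, h₁, h₂]

lemma gamma_P2 (w : (H ⊗[k] H) ⊗[k] H) (u : A ⊗[k] (A ⊗[k] A)) :
    gammaHom MA w (P2 u) = P2 (gammaHom MA (t23 (k := k) w) u) := by
  induction w using TensorProduct.induction_on with
  | zero => simp
  | tmul p z =>
    induction p using TensorProduct.induction_on with
    | zero => simp [TensorProduct.zero_tmul]
    | tmul x y =>
      rw [t23_tmul]
      induction u using TensorProduct.induction_on with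
      | zero => simp
      | tmul a v =>
        induction v using TensorProduct.induction_on with
        | zero => simp [TensorProduct.tmul_zero]
        | tmul b c => simp [gammaHom_tmul]
        | add v₁ v₂ h₁ h₂ => simp only [TensorProduct.tmul_add, map_add, h₁, h₂]
      | add u₁ u₂ h₁ h₂ => simp only [map_add, h₁, h₂]
    | add p₁ p₂ h₁ h₂ =>
      simp only [TensorProduct.add_tmul, map_add, LinearMap.add_apply, h₁, h₂]
  | add w₁ w₂ h₁ h₂ =>
    simp only [map_add, LinearMap.add_apply, h₁, h₂]

lemma leftOp_braid (X : H ⊗[k] H) :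
    leftOp (braid MA X) = P1 ∘ₗ (gammaHom MA (leg12 k H X) : _ →ₗ[k] _) := by
  induction X using TensorProduct.induction_on with
  | zero => simp [braid_zero, leftOp_zero]
  | tmul x y =>
    apply ext3
    intro a b c
    simp [leg12, Algebra.TensorProduct.includeLeft_apply, gammaHom_tmul]
  | add u v hu hv =>
    rw [braid_add, leftOp_add, hu, hv, map_add, map_add, LinearMap.comp_add]

lemma rightOp_braid (X : H ⊗[k] H) :
    rightOp (braid MA X) = P2 ∘ₗ (gammaHom MA (leg23 k H X) : _ →ₗ[k] _) := by
  induction X using TensorProduct.induction_on with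
  | zero => simp [braid_zero, rightOp_zero]
  | tmul x y =>
    apply ext3
    intro a b c
    simp [rightOp, leg23, gammaHom_tmul]
  | add u v hu hv =>
    rw [braid_add, rightOp_add, hu, hv, map_add, map_add, LinearMap.comp_add]

lemma PPP (u : A ⊗[k] (A ⊗[k] A)) : P1 (P2 (P1 u)) = P2 (P1 (P2 u)) := by
  induction u using TensorProduct.induction_on with
  | zero => simp
  | tmul a v =>
    induction v using TensorProduct.induction_on with
    | zero => simp [TensorProduct.tmul_zero]
    | tmul b c => simp
    | add v₁ v₂ h₁ h₂ => simp only [TensorProduct.tmul_add, map_add, h₁, h₂]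
  | add u₁ u₂ h₁ h₂ => simp only [map_add, h₁, h₂]

lemma commcomm {M N : Type*} [AddCommMonoid M] [AddCommMonoid N] [Module k M] [Module k N]
    (x : M ⊗[k] N) :
    (TensorProduct.comm k N M) ((TensorProduct.comm k M N) x) = x := by
  induction x using TensorProduct.induction_on with
  | zero => simp
  | tmul a b => simp
  | add u v hu hv => simp [map_add, hu, hv]

lemma beta_comm (X : H ⊗[k] H) (u : A ⊗[k] A) :
    betaHom MA X ((TensorProduct.comm k A A) u)
      = (TensorProduct.comm k A A) (betaHom MA ((TensorProduct.comm k H H) X) u) := by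
  induction X using TensorProduct.induction_on with
  | zero => simp
  | tmul x y =>
    induction u using TensorProduct.induction_on with
    | zero => simp
    | tmul a b => simp [betaHom_tmul]
    | add u₁ u₂ h₁ h₂ => simp only [map_add, h₁, h₂]
  | add X₁ X₂ h₁ h₂ => simp only [map_add, LinearMap.add_apply, h₁, h₂]

/-- Triangularity: the braiding is an involution. -/
lemma braid_invol (QT : QuasiTriangular k H)
    (htri : (TensorProduct.comm k H H) QT.Rinv = QT.R) (u : A ⊗[k] A) :
    braid MA QT.R (braid MA QT.R u) = u := by
  have hc : (TensorProduct.comm k H H) QT.R = QT.Rinv := by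
    rw [← htri, commcomm]
  simp only [braid_eq, LinearMap.comp_apply, LinearEquiv.coe_coe]
  rw [beta_comm, hc]
  have : betaHom MA QT.Rinv (betaHom MA QT.R u) = u := by
    rw [← Module.End.mul_apply, ← map_mul, QT.inv_mul, map_one, Module.End.one_apply]
  rw [this, commcomm]

/-- The quantum Yang–Baxter equation. -/
theorem YBE (QT : QuasiTriangular k H) :
    leg12 k H QT.R * leg13 k H QT.R * leg23 k H QT.R
      = leg23 k H QT.R * leg13 k H QT.R * leg12 k H QT.R := by
  -- conjugation identity, from `intertwine`
  have key : ∀ X : H ⊗[k] H,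
      t12 (k := k) (TensorProduct.map Coalgebra.comul LinearMap.id X)
        = leg12 k H QT.R * TensorProduct.map Coalgebra.comul LinearMap.id X
            * leg12 k H QT.Rinv := by
    intro X
    induction X using TensorProduct.induction_on with
    | zero => simp
    | tmul x y =>
      simp only [TensorProduct.map_tmul, LinearMap.id_coe, id_eq, t12, LinearMap.rTensor_tmul,
        LinearEquiv.coe_coe]
      rw [QT.intertwine x]
      simp only [leg12, Algebra.TensorProduct.includeLeft_apply,
        Algebra.TensorProduct.tmul_mul_tmul, one_mul, mul_one]
    | add u v hu hv => simp only [map_add, hu, hv, mul_add, add_mul]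
  -- t12 is multiplicative on the relevant elements
  have hT : ∀ w w' : (H ⊗[k] H) ⊗[k] H,
      t12 (k := k) (w * w') = t12 (k := k) w * t12 (k := k) w' := by
    intro w w'
    have : t12 (k := k) (H := H)
        = ((Algebra.TensorProduct.map (Algebra.TensorProduct.comm k H H).toAlgHom
            (AlgHom.id k H)).toLinearMap) := by
      apply TensorProduct.ext'
      intro p z
      induction p using TensorProduct.induction_on with
      | zero => simp [TensorProduct.zero_tmul]
      | tmul x y => simp [t12]
      | add p₁ p₂ h₁ h₂ => simp only [TensorProduct.add_tmul, map_add, h₁, h₂]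
    simp only [this, AlgHom.toLinearMap_apply, map_mul]
  have h0 := QT.comul_id
  have h1 := key QT.R
  rw [h0, hT, t12_leg13, t12_leg23] at h1
  -- h1 : leg23 R * leg13 R = leg12 R * (leg13 R * leg23 R) * leg12 Rinv
  have h2 : leg23 k H QT.R * leg13 k H QT.R * leg12 k H QT.R
      = leg12 k H QT.R * (leg13 k H QT.R * leg23 k H QT.R)
          * (leg12 k H QT.Rinv * leg12 k H QT.R) := by
    rw [← mul_assoc, ← h1, mul_assoc]
  rw [← map_mul, QT.inv_mul, map_one, mul_one] at h2
  rw [h2, mul_assoc]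

/-- The braid relation for the braiding `χ`. -/
lemma braid_rel (QT : QuasiTriangular k H) (u : A ⊗[k] (A ⊗[k] A)) :
    leftOp (braid MA QT.R) (rightOp (braid MA QT.R) (leftOp (braid MA QT.R) u))
      = rightOp (braid MA QT.R) (leftOp (braid MA QT.R) (rightOp (braid MA QT.R) u)) := by
  simp only [leftOp_braid, rightOp_braid, LinearMap.comp_apply]
  rw [gamma_P2, t23_leg12, gamma_P1, t12_leg23, gamma_P1, t12_leg13]
  rw [gamma_P1, t12_leg23, gamma_P2, t23_leg12, gamma_P2, t23_leg13]
  rw [PPP]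
  congr 3
  calc gammaHom MA (leg23 k H QT.R) (gammaHom MA (leg13 k H QT.R)
          (gammaHom MA (leg12 k H QT.R) u))
      = gammaHom MA (leg23 k H QT.R * leg13 k H QT.R * leg12 k H QT.R) u := by
        simp [map_mul, Module.End.mul_apply]
    _ = gammaHom MA (leg12 k H QT.R * leg13 k H QT.R * leg23 k H QT.R) u := by
        rw [← YBE QT]
    _ = gammaHom MA (leg12 k H QT.R) (gammaHom MA (leg13 k H QT.R)
          (gammaHom MA (leg23 k H QT.R) u)) := by
        simp [map_mul, Module.End.mul_apply]

/-- `u ↦ m ∘ β(u) : A ⊗ A → A`. -/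
def Bm : H ⊗[k] H →ₗ[k] (A ⊗[k] A →ₗ[k] A) :=
  LinearMap.llcomp k (A ⊗[k] A) (A ⊗[k] A) A (LinearMap.mul' k A) ∘ₗ (betaHom MA).toLinearMap

lemma Bm_apply (X : H ⊗[k] H) (u : A ⊗[k] A) :
    Bm MA X u = LinearMap.mul' k A (betaHom MA X u) := rfl

/-- `Ψ((x ⊗ y) ⊗ z) : a ⊗ (b ⊗ c) ↦ (z ▷ c) ⊗ (x ▷ a)(y ▷ b)`. -/
def Psi (w : (H ⊗[k] H) ⊗[k] H) : A ⊗[k] (A ⊗[k] A) →ₗ[k] A ⊗[k] A :=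
  (TensorProduct.comm k A A).toLinearMap ∘ₗ
    (TensorProduct.homTensorHomMap (RingHom.id k) (A ⊗[k] A) A A A
      (TensorProduct.map (Bm MA) MA.act.toLinearMap w)) ∘ₗ
    (TensorProduct.assoc k A A A).symm.toLinearMap

lemma Psi_zero : Psi MA (0 : (H ⊗[k] H) ⊗[k] H) = 0 := by
  simp [Psi]

lemma Psi_add (w w' : (H ⊗[k] H) ⊗[k] H) : Psi MA (w + w') = Psi MA w + Psi MA w' := by
  simp only [Psi, map_add, LinearMap.add_comp, LinearMap.comp_add]

lemma Psi_tmul (p : H ⊗[k] H) (z : H) (a b c : A) :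
    Psi MA (p ⊗ₜ[k] z) (a ⊗ₜ[k] (b ⊗ₜ[k] c))
      = (MA.act z c) ⊗ₜ[k] (LinearMap.mul' k A (betaHom MA p (a ⊗ₜ[k] b))) := by
  simp [Psi, TensorProduct.homTensorHomMap_apply, Bm_apply]

/-- `Ψ'(x ⊗ (y ⊗ z)) : a ⊗ (b ⊗ c) ↦ (y ▷ b)(z ▷ c) ⊗ (x ▷ a)`. -/
def Psi' (w : H ⊗[k] (H ⊗[k] H)) : A ⊗[k] (A ⊗[k] A) →ₗ[k] A ⊗[k] A :=
  (TensorProduct.comm k A A).toLinearMap ∘ₗ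
    (TensorProduct.homTensorHomMap (RingHom.id k) A (A ⊗[k] A) A A
      (TensorProduct.map MA.act.toLinearMap (Bm MA) w))

lemma Psi'_zero : Psi' MA (0 : H ⊗[k] (H ⊗[k] H)) = 0 := by
  simp [Psi']

lemma Psi'_add (w w' : H ⊗[k] (H ⊗[k] H)) : Psi' MA (w + w') = Psi' MA w + Psi' MA w' := by
  simp only [Psi', map_add, LinearMap.add_comp, LinearMap.comp_add]

lemma Psi'_tmul (x : H) (q : H ⊗[k] H) (a b c : A) :
    Psi' MA (x ⊗ₜ[k] q) (a ⊗ₜ[k] (b ⊗ₜ[k] c))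
      = (LinearMap.mul' k A (betaHom MA q (b ⊗ₜ[k] c))) ⊗ₜ[k] (MA.act x a) := by
  simp [Psi', TensorProduct.homTensorHomMap_apply, Bm_apply]

lemma leib1a (X : H ⊗[k] H) :
    braid MA X ∘ₗ mul12 = Psi MA (TensorProduct.map Coalgebra.comul LinearMap.id X) := by
  induction X using TensorProduct.induction_on with
  | zero => rw [braid_zero, map_zero, Psi_zero, LinearMap.zero_comp]
  | tmul x y =>
    apply ext3
    intro a b c
    simp only [TensorProduct.map_tmul, LinearMap.id_coe, id_eq, Psi_tmul,
      LinearMap.comp_apply, mul12, LinearMap.rTensor_tmul, LinearEquiv.coe_coe,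
      TensorProduct.assoc_symm_tmul, LinearMap.mul'_apply, braid_tmul]
    rw [MA.act_mul x a b, ← betaHom_eq]
  | add u v hu hv =>
    rw [braid_add, map_add, Psi_add, LinearMap.add_comp, hu, hv]

lemma leib1b (X Y : H ⊗[k] H) :
    mul23 ∘ₗ leftOp (braid MA X) ∘ₗ rightOp (braid MA Y)
      = Psi MA (leg13 k H X * leg23 k H Y) := by
  induction X using TensorProduct.induction_on with
  | zero =>
    rw [braid_zero, leftOp_zero, map_zero, zero_mul, Psi_zero,
      LinearMap.zero_comp, LinearMap.comp_zero]
  | tmul x y =>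
    induction Y using TensorProduct.induction_on with
    | zero =>
      rw [braid_zero, rightOp_zero, map_zero, mul_zero, Psi_zero, LinearMap.comp_zero,
        LinearMap.comp_zero]
    | tmul x' y' =>
      apply ext3
      intro a b c
      simp only [leg13, leg23, Algebra.TensorProduct.map_tmul,
        Algebra.TensorProduct.includeLeft_apply, Algebra.TensorProduct.includeRight_apply,
        AlgHom.coe_id, id_eq, Algebra.TensorProduct.tmul_mul_tmul, one_mul, mul_one,
        Psi_tmul, betaHom_tmul, LinearMap.comp_apply, rightOp, LinearMap.lTensor_tmul,
        braid_tmul, leftOp_tmul, TensorProduct.assoc_tmul, mul23,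
        TensorProduct.map_tmul, LinearMap.mul'_apply, map_mul, Module.End.mul_apply]
    | add Y₁ Y₂ h₁ h₂ =>
      rw [braid_add, rightOp_add, map_add, mul_add, Psi_add, LinearMap.comp_add,
        LinearMap.comp_add, h₁, h₂]
  | add X₁ X₂ h₁ h₂ =>
    rw [braid_add, leftOp_add, map_add, add_mul, Psi_add, LinearMap.add_comp,
      LinearMap.comp_add, h₁, h₂]

lemma leib2a (X : H ⊗[k] H) :
    braid MA X ∘ₗ mul23 = Psi' MA (TensorProduct.map LinearMap.id Coalgebra.comul X) := by
  induction X using TensorProduct.induction_on with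
  | zero => rw [braid_zero, map_zero, Psi'_zero, LinearMap.zero_comp]
  | tmul x y =>
    apply ext3
    intro a b c
    simp only [TensorProduct.map_tmul, LinearMap.id_coe, id_eq, Psi'_tmul,
      LinearMap.comp_apply, mul23, LinearMap.lTensor_tmul, LinearMap.mul'_apply, braid_tmul]
    rw [MA.act_mul y b c, ← betaHom_eq]
  | add u v hu hv =>
    rw [braid_add, map_add, Psi'_add, LinearMap.add_comp, hu, hv]

lemma leib2b (X Y : H ⊗[k] H) :
    mul12 ∘ₗ rightOp (braid MA Y) ∘ₗ leftOp (braid MA X)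
      = Psi' MA (leg13' k H Y * leg12' k H X) := by
  induction X using TensorProduct.induction_on with
  | zero =>
    rw [braid_zero, leftOp_zero, map_zero, mul_zero, Psi'_zero,
      LinearMap.comp_zero, LinearMap.comp_zero]
  | tmul x y =>
    induction Y using TensorProduct.induction_on with
    | zero =>
      rw [braid_zero, rightOp_zero, map_zero, zero_mul, Psi'_zero,
        LinearMap.zero_comp, LinearMap.comp_zero]
    | tmul x' y' =>
      apply ext3
      intro a b c
      simp only [leg12', leg13', Algebra.TensorProduct.map_tmul,
        Algebra.TensorProduct.includeLeft_apply, Algebra.TensorProduct.includeRight_apply,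
        AlgHom.coe_id, id_eq, Algebra.TensorProduct.tmul_mul_tmul, one_mul, mul_one,
        Psi'_tmul, betaHom_tmul, LinearMap.comp_apply, rightOp, LinearMap.lTensor_tmul,
        braid_tmul, leftOp_tmul, TensorProduct.assoc_tmul, mul12,
        TensorProduct.map_tmul, LinearMap.mul'_apply, map_mul, Module.End.mul_apply,
        LinearEquiv.coe_coe, TensorProduct.assoc_symm_tmul, LinearMap.rTensor_tmul]
    | add Y₁ Y₂ h₁ h₂ =>
      rw [braid_add, rightOp_add, map_add, add_mul, Psi'_add, LinearMap.add_comp,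
        LinearMap.comp_add, h₁, h₂]
  | add X₁ X₂ h₁ h₂ =>
    rw [braid_add, leftOp_add, map_add, mul_add, Psi'_add, LinearMap.comp_add,
      LinearMap.comp_add, h₁, h₂]

lemma leib1 (QT : QuasiTriangular k H) :
    braid MA QT.R ∘ₗ mul12
      = mul23 ∘ₗ leftOp (braid MA QT.R) ∘ₗ rightOp (braid MA QT.R) := by
  rw [leib1a, QT.comul_id, ← leib1b]

lemma leib2 (QT : QuasiTriangular k H) :
    braid MA QT.R ∘ₗ mul23
      = mul12 ∘ₗ rightOp (braid MA QT.R) ∘ₗ leftOp (braid MA QT.R) := by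
  rw [leib2a, QT.id_comul, ← leib2b]

lemma mul12_tmul3 (a b c : A) : mul12 (a ⊗ₜ[k] (b ⊗ₜ[k] c)) = (a * b) ⊗ₜ[k] c := by
  simp [mul12]

lemma mul23_tmul3 (a b c : A) : mul23 (a ⊗ₜ[k] (b ⊗ₜ[k] c)) = a ⊗ₜ[k] (b * c) := by
  simp [mul23]

lemma mul12_assoc (v : A ⊗[k] A) (c : A) :
    mul12 ((TensorProduct.assoc k A A A) (v ⊗ₜ[k] c)) = (LinearMap.mul' k A v) ⊗ₜ[k] c := by
  rw [mul12, LinearMap.comp_apply]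
  rw [show ((TensorProduct.assoc k A A A).symm.toLinearMap
      ((TensorProduct.assoc k A A A) (v ⊗ₜ[k] c))) = v ⊗ₜ[k] c from
    (TensorProduct.assoc k A A A).symm_apply_apply _]
  simp

end Aux

/- STATEMENT 15: for a *triangular* Hopf algebra (`τ(R⁻¹) = R`) the q-commutator
satisfies the generalized Jacobi identity
`[·,·]_χ ∘ ([·,·]_χ ⊗ id) = [·,·]_χ ∘ (id ⊗ [·,·]_χ) + [·,·]_χ ∘ ([·,·]_χ ⊗ id) ∘ (id ⊗ χ)`. -/
theorem qBracket_jacobi (QT : QuasiTriangular k H)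
    (htri : (TensorProduct.comm k H H) QT.Rinv = QT.R) (MA : ModuleAlgebra k H A) :
    qBracket (braid MA QT.R) ∘ₗ LinearMap.rTensor A (qBracket (braid MA QT.R)) ∘ₗ
        (TensorProduct.assoc k A A A).symm.toLinearMap =
      qBracket (braid MA QT.R) ∘ₗ LinearMap.lTensor A (qBracket (braid MA QT.R))
        + qBracket (braid MA QT.R) ∘ₗ LinearMap.rTensor A (qBracket (braid MA QT.R)) ∘ₗ
            (TensorProduct.assoc k A A A).symm.toLinearMap ∘ₗ rightOp (braid MA QT.R) := by
  have hinv : ∀ v : A ⊗[k] (A ⊗[k] A),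
      rightOp (braid MA QT.R) (rightOp (braid MA QT.R) v) = v := by
    intro v
    induction v using TensorProduct.induction_on with
    | zero => simp [rightOp]
    | tmul a q =>
      simp only [rightOp, LinearMap.lTensor_tmul]
      rw [braid_invol MA QT htri]
    | add u v hu hv => simp only [map_add, hu, hv]
  have hra : ∀ v, LinearMap.mul' k A (mul12 v) = LinearMap.mul' k A (mul23 v) := by
    intro v
    have h : (LinearMap.mul' k A) ∘ₗ (mul12 (k := k) (A := A))
        = (LinearMap.mul' k A) ∘ₗ mul23 := by
      apply ext3
      intro a b c
      simp [mul12_tmul3, mul23_tmul3, LinearMap.mul'_apply, mul_assoc]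
    exact LinearMap.congr_fun h v
  have hrb : ∀ v, braid MA QT.R (mul12 v)
      = mul23 (leftOp (braid MA QT.R) (rightOp (braid MA QT.R) v)) := by
    intro v
    have := LinearMap.congr_fun (leib1 MA QT) v
    simpa using this
  have hrc : ∀ v, braid MA QT.R (mul23 v)
      = mul12 (rightOp (braid MA QT.R) (leftOp (braid MA QT.R) v)) := by
    intro v
    have := LinearMap.congr_fun (leib2 MA QT) v
    simpa using this
  have hre := braid_rel MA QT
  have hq : ∀ v : A ⊗[k] A, qBracket (braid MA QT.R) v
      = LinearMap.mul' k A v - LinearMap.mul' k A (braid MA QT.R v) := by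
    intro v
    simp [qBracket, map_sub]
  have hrT : ∀ v : A ⊗[k] (A ⊗[k] A),
      LinearMap.rTensor A (qBracket (braid MA QT.R))
        ((TensorProduct.assoc k A A A).symm.toLinearMap v)
      = mul12 v - mul12 (leftOp (braid MA QT.R) v) := by
    intro v
    induction v using TensorProduct.induction_on with
    | zero => simp only [map_zero, sub_zero]
    | tmul a q =>
      induction q using TensorProduct.induction_on with
      | zero =>
        simp only [TensorProduct.tmul_zero, map_zero, sub_zero]
      | tmul b c =>
        rw [LinearEquiv.coe_toLinearMap, TensorProduct.assoc_symm_tmul, LinearMap.rTensor_tmul, hq,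
          TensorProduct.sub_tmul, mul12_tmul3, leftOp_tmul, mul12_assoc,
          LinearMap.mul'_apply]
      | add q₁ q₂ h₁ h₂ =>
        simp only [TensorProduct.tmul_add, map_add, h₁, h₂]
        abel
    | add v₁ v₂ h₁ h₂ =>
      simp only [map_add, h₁, h₂]
      abel
  have hlT : ∀ v : A ⊗[k] (A ⊗[k] A),
      LinearMap.lTensor A (qBracket (braid MA QT.R)) v
      = mul23 v - mul23 (rightOp (braid MA QT.R) v) := by
    intro v
    induction v using TensorProduct.induction_on with
    | zero => simp
    | tmul a q =>
      rw [LinearMap.lTensor_tmul, hq, TensorProduct.tmul_sub]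
      simp only [mul23, rightOp, LinearMap.lTensor_tmul]
    | add v₁ v₂ h₁ h₂ =>
      simp only [map_add, h₁, h₂]
      abel
  apply LinearMap.ext
  intro u
  simp only [LinearMap.comp_apply, LinearMap.add_apply, LinearEquiv.coe_coe]
  simp only [← LinearEquiv.coe_toLinearMap]
  rw [hrT, hlT, hrT, hq, hq, hq]
  simp only [map_sub, hrb, hrc, hra, hre, hinv]
  abel

end
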